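/- Let f : ℝ → ℝ be continuous and let u be a solution of the radial equation on an interval J ⊆ (0,∞). Suppose r₀ ∈ J satisfies u'(r₀) = 0, f(u(r₀)) = 0, and u(r₀) is a strict local minimum point of F (i.e. F(s) > F(u(r₀)) for all s ≠ u(r₀) in some neighborhood of u(r₀)). Then u(r) = u(r₀) for every r ∈ J with r ≥ r₀. -/

import Mathlib

open Set Filter MeasureTheory

noncomputable def phim (m x : ℝ) : ℝ := |x| ^ (m - 2) * x

noncomputable def Fint (f : ℝ → ℝ) (s : ℝ) : ℝ := ∫ t in (0:ℝ)..s, f t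

noncomputable def Qfun (N m : ℝ) (f : ℝ → ℝ) (s : ℝ) : ℝ :=
  m * N * Fint f s - (N - m) * s * f s

/-- `u` (with derivative function `u'`) is a solution of the radial quasilinear
equation on the set `J`. -/
def IsSolutionOn (N m : ℝ) (f : ℝ → ℝ) (J : Set ℝ) (u u' : ℝ → ℝ) : Prop :=
  (∀ r ∈ J, HasDerivWithinAt u (u' r) J r) ∧ ContinuousOn u' J ∧
    ∃ w' : ℝ → ℝ,
      (∀ r ∈ J ∩ Set.Ioi (0:ℝ),
        HasDerivWithinAt (fun t => phim m (u' t)) (w' r) (J ∩ Set.Ioi (0:ℝ)) r) ∧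
      ContinuousOn w' (J ∩ Set.Ioi (0:ℝ)) ∧
      ∀ r ∈ J ∩ Set.Ioi (0:ℝ), w' r + ((N - 1) / r) * phim m (u' r) + f (u r) = 0

def IsIVPSolutionOn (N m : ℝ) (f : ℝ → ℝ) (α : ℝ) (J : Set ℝ) (u u' : ℝ → ℝ) : Prop :=
  IsSolutionOn N m f J u u' ∧ u 0 = α ∧ u' 0 = 0

/-- Admissible domains for the IVP: `[0,∞)` or `[0,R)` with `0 < R`. -/
def IVPDomain (J : Set ℝ) : Prop :=
  J = Set.Ici (0:ℝ) ∨ ∃ R : ℝ, 0 < R ∧ J = Set.Ico (0:ℝ) R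

/-- The solution `u` of the IVP on `J` cannot be extended to a solution on a
strictly larger admissible domain. -/
def Noncontinuable (N m : ℝ) (f : ℝ → ℝ) (α : ℝ) (J : Set ℝ) (u u' : ℝ → ℝ) : Prop :=
  ∀ J' : Set ℝ, IVPDomain J' → J ⊂ J' →
    ¬ ∃ v v' : ℝ → ℝ, IsIVPSolutionOn N m f α J' v v' ∧ Set.EqOn v u J ∧ Set.EqOn v' u' J

open Classical in
/-- The filter describing the approach to the right endpoint of an IVP domain. -/
noncomputable def domEnd (J : Set ℝ) : Filter ℝ :=
  if J = Set.Ici (0:ℝ) then Filter.atTop else nhdsWithin (sSup J) (Set.Iio (sSup J))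

def LocLipschitzOn (f : ℝ → ℝ) (S : Set ℝ) : Prop :=
  ∀ x ∈ S, ∃ ε : ℝ, 0 < ε ∧ ∃ K : NNReal, LipschitzOnWith K f (Metric.ball x ε ∩ S)

/-- Assumption (f₂). -/
structure Hf2 (f : ℝ → ℝ) (βm βp : ℝ) (γm γp : EReal) : Prop where
  hβm : βm < 0
  hβp : 0 < βp
  hFneg : ∀ s : ℝ, s ∈ Set.Ioo βm βp → s ≠ 0 → Fint f s < 0
  hFβm : Fint f βm = 0
  hFβp : Fint f βp = 0
  hγp : (βp : EReal) < γp
  hγm : γm < (βm : EReal)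
  hfpos : ∀ s : ℝ, βp < s → (s : EReal) < γp → 0 < f s
  hfneg : ∀ s : ℝ, γm < (s : EReal) → s < βm → f s < 0
  hγpzero : ∀ s : ℝ, (s : EReal) = γp → f s = 0
  hγmzero : ∀ s : ℝ, (s : EReal) = γm → f s = 0
  hlim : ∃ L : EReal,
    Filter.Tendsto (fun s : ℝ => (Fint f s : EReal))
      (Filter.comap Real.toEReal (nhdsWithin γp (Set.Iio γp))) (nhds L) ∧
    Filter.Tendsto (fun s : ℝ => (Fint f s : EReal))
      (Filter.comap Real.toEReal (nhdsWithin γm (Set.Ioi γm))) (nhds L)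
  hlip : LocLipschitzOn f {s : ℝ | (γm < (s : EReal) ∧ s < 0) ∨ (0 < s ∧ (s : EReal) < γp)}

/-- Assumption (f₃). -/
def Hf3 (N m : ℝ) (f : ℝ → ℝ) (βm βp : ℝ) (γm γp : EReal) : Prop :=
  (γp = ⊤ →
    (∃ βb : ℝ, βp < βb ∧ ∀ s : ℝ, βb ≤ s → 0 ≤ Qfun N m f s) ∧
    (∃ θ : ℝ, θ ∈ Set.Ioo (0:ℝ) 1 ∧
      Filter.Tendsto (fun s : ℝ =>
        sInf ((fun p : ℝ × ℝ =>
          Qfun N m f p.2 * ((|s| ^ (m - 2) * s) / f p.1) ^ (N / m)) ''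
            (Set.Icc (θ * s) s ×ˢ Set.Icc (θ * s) s)))
        Filter.atTop Filter.atTop)) ∧
  (γm = ⊥ →
    (∃ βb : ℝ, -βb < βm ∧ ∀ s : ℝ, s ≤ -βb → 0 ≤ Qfun N m f s) ∧
    (∃ θ : ℝ, θ ∈ Set.Ioo (0:ℝ) 1 ∧
      Filter.Tendsto (fun s : ℝ =>
        sInf ((fun p : ℝ × ℝ =>
          Qfun N m f p.2 * ((|s| ^ (m - 2) * s) / f p.1) ^ (N / m)) ''
            (Set.Icc s (θ * s) ×ˢ Set.Icc s (θ * s))))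
        Filter.atBot Filter.atTop))

/-- Assumption (f₄). -/
def Hf4 (N m : ℝ) (f : ℝ → ℝ) (βm βp : ℝ) (γm γp : EReal) : Prop :=
  (γp ≠ ⊤ → ∃ L₀ : ℝ, 0 < L₀ ∧ ∃ βb : ℝ, βp < βb ∧
    ∀ s : ℝ, βb ≤ s → (s : EReal) < γp → f s ≤ L₀ * (γp.toReal - s) ^ (m - 1)) ∧
  (γm ≠ ⊥ → ∃ L₀ : ℝ, 0 < L₀ ∧ ∃ βb : ℝ, -βm < βb ∧
    ∀ s : ℝ, γm < (s : EReal) → s ≤ -βb → -f s ≤ L₀ * (s - γm.toReal) ^ (m - 1))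

/-!
Along a solution the energy `I(r) = |u'(r)|^m / m' + F(u(r))` satisfies
`I'(r) = -((N-1)/r) |u'(r)|^m ≤ 0`, so it is nonincreasing. At `r₀` we have `I(r₀) = F(u(r₀))`,
hence `F(u(r)) ≤ I(r) ≤ F(u(r₀))` for `r ≥ r₀`. Since `u(r₀)` is a strict local minimum of `F`,
`u(r)` can never lie in a punctured neighbourhood of `u(r₀)`, and by continuity (intermediate
values) it can then never leave the value `u(r₀)`.
-/

lemma mul_phim_self {m : ℝ} (hm : m ≠ 0) (v : ℝ) : v * phim m v = |v| ^ m := by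
  rcases eq_or_ne v 0 with rfl | hv
  · simp [phim, Real.zero_rpow hm]
  · have hv2 : v * v = |v| ^ (2 : ℝ) := by
      rw [Real.rpow_two, sq_abs, sq]
    rw [phim, mul_left_comm, hv2, ← Real.rpow_add (abs_pos.mpr hv)]
    norm_num

lemma abs_phim {m : ℝ} (hm : m ≠ 1) (v : ℝ) : |phim m v| = |v| ^ (m - 1) := by
  rcases eq_or_ne v 0 with rfl | hv
  · simp [phim, Real.zero_rpow (sub_ne_zero.mpr hm)]
  · rw [phim, abs_mul, abs_of_nonneg (Real.rpow_nonneg (abs_nonneg v) _),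
      show m - 1 = m - 2 + 1 by ring, Real.rpow_add_one (abs_ne_zero.mpr hv)]

lemma abs_phim_rpow_conj {m : ℝ} (hm : m ≠ 1) (v : ℝ) :
    |phim m v| ^ (m / (m - 1)) = |v| ^ m := by
  rw [abs_phim hm, ← Real.rpow_mul (abs_nonneg v), mul_div_cancel₀ _ (sub_ne_zero.mpr hm)]

lemma phim_conj_phim {m : ℝ} (hm : m ≠ 1) (v : ℝ) : phim (m / (m - 1)) (phim m v) = v := by
  rcases eq_or_ne v 0 with rfl | hv
  · simp [phim]
  · have hexp : (m - 1) * (m / (m - 1) - 2) = 2 - m := by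
      field_simp [sub_ne_zero.mpr hm]
      ring
    rw [phim, abs_phim hm, ← Real.rpow_mul (abs_nonneg v), hexp, phim, ← mul_assoc,
      ← Real.rpow_add (abs_pos.mpr hv)]
    norm_num

lemma hasDerivAt_abs_rpow_div {p : ℝ} (hp : 1 < p) (x : ℝ) :
    HasDerivAt (fun w : ℝ => |w| ^ p / p) (phim p x) x := by
  refine ((hasDerivAt_abs_rpow x hp).div_const p).congr_deriv ?_
  rw [phim]
  field_simp

lemma hasDerivAt_Fint {f : ℝ → ℝ} (hf : Continuous f) (s : ℝ) :
    HasDerivAt (Fint f) (f s) s :=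
  intervalIntegral.integral_hasDerivAt_right (hf.intervalIntegrable 0 s)
    hf.stronglyMeasurable.stronglyMeasurableAtFilter hf.continuousAt

/-- The energy `I` of the paper. -/
noncomputable def radialEnergy (m : ℝ) (f u u' : ℝ → ℝ) (r : ℝ) : ℝ :=
  |u' r| ^ m / (m / (m - 1)) + Fint f (u r)

section Energy

variable {N m : ℝ} {f : ℝ → ℝ} {J : Set ℝ} {u u' : ℝ → ℝ}

lemma hasDerivWithinAt_radialEnergy (hm : 1 < m) (hf : Continuous f)
    (hu : IsSolutionOn N m f J u u') {r : ℝ} (hr : r ∈ J ∩ Ioi 0) :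
    HasDerivWithinAt (radialEnergy m f u u') (-((N - 1) / r * |u' r| ^ m)) (J ∩ Ioi 0) r := by
  obtain ⟨hu_deriv, -, w', hw'_deriv, -, heqn⟩ := hu
  have hm1 : m ≠ 1 := hm.ne'
  have hp : 1 < m / (m - 1) := (one_lt_div (by linarith)).mpr (by linarith)
  -- writing `|u'|^m / m'` as `|φ_m(u')|^{m'} / m'` lets the chain rule run through `φ_m(u')`
  have hI : radialEnergy m f u u' =
      fun t => |phim m (u' t)| ^ (m / (m - 1)) / (m / (m - 1)) + Fint f (u t) := by
    funext t
    rw [radialEnergy, abs_phim_rpow_conj hm1]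
  have hkin := (hasDerivAt_abs_rpow_div hp (phim m (u' r))).comp_hasDerivWithinAt r
    (hw'_deriv r hr)
  rw [phim_conj_phim hm1] at hkin
  have hpot := (hasDerivAt_Fint hf (u r)).comp_hasDerivWithinAt r
    ((hu_deriv r hr.1).mono (inter_subset_left : J ∩ Ioi 0 ⊆ J))
  rw [hI]
  refine (hkin.add hpot).congr_deriv ?_
  linear_combination u' r * heqn r hr - (N - 1) / r * mul_phim_self (m := m) (by linarith) (u' r)

lemma antitoneOn_radialEnergy (hm : 1 < m) (hN : 1 ≤ N) (hf : Continuous f)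
    (hJ : J.OrdConnected) (hu : IsSolutionOn N m f J u u') :
    AntitoneOn (radialEnergy m f u u') (J ∩ Ioi 0) := by
  have hderiv := fun r (hr : r ∈ J ∩ Ioi 0) => hasDerivWithinAt_radialEnergy hm hf hu hr
  refine antitoneOn_of_hasDerivWithinAt_nonpos (hJ.inter ordConnected_Ioi).convex
    (fun r hr => (hderiv r hr).continuousWithinAt)
    (fun r hr => (hderiv r (interior_subset hr)).mono interior_subset) fun r hr => ?_
  have hr_pos : 0 < r := (interior_subset hr : r ∈ J ∩ Ioi 0).2
  have : 0 ≤ (N - 1) / r * |u' r| ^ m :=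
    mul_nonneg (div_nonneg (by linarith) hr_pos.le) (Real.rpow_nonneg (abs_nonneg _) m)
  linarith

lemma Fint_le_of_deriv_eq_zero (hm : 1 < m) (hN : 1 ≤ N) (hf : Continuous f)
    (hJ : J.OrdConnected) (hu : IsSolutionOn N m f J u u') {r₀ r : ℝ}
    (hr₀ : r₀ ∈ J ∩ Ioi 0) (hd : u' r₀ = 0) (hr : r ∈ J ∩ Ioi 0) (hle : r₀ ≤ r) :
    Fint f (u r) ≤ Fint f (u r₀) := by
  have hI := antitoneOn_radialEnergy hm hN hf hJ hu hr₀ hr hle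
  have hkin : 0 ≤ |u' r| ^ m / (m / (m - 1)) :=
    div_nonneg (Real.rpow_nonneg (abs_nonneg _) m) (div_pos (by linarith) (by linarith)).le
  simp only [radialEnergy, hd, abs_zero, Real.zero_rpow (by linarith : m ≠ 0), zero_div,
    zero_add] at hI
  linarith

end Energy

lemma IsPreconnected.eq_of_isolated_value {X : Type*} [TopologicalSpace X] {s : Set X}
    (hs : IsPreconnected s) {g : X → ℝ} (hg : ContinuousOn g s) {a : X} (ha : a ∈ s)
    {ε : ℝ} (hε : 0 < ε) (hgap : ∀ x ∈ s, |g x - g a| < ε → g x = g a) :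
    ∀ x ∈ s, g x = g a := by
  intro x hx
  by_contra hne
  have hfar : ε ≤ |g x - g a| := not_lt.mp fun h => hne (hgap x hx h)
  have hdist : ContinuousOn (fun y => |g y - g a|) s := (hg.sub continuousOn_const).abs
  obtain ⟨y, hy, hy_eq⟩ : ε / 2 ∈ (fun y => |g y - g a|) '' s :=
    hs.intermediate_value ha hx hdist ⟨by simp only [sub_self, abs_zero]; linarith, by linarith⟩
  have hy_near : |g y - g a| < ε := by simp only at hy_eq; linarith
  simp only [hgap y hy hy_near, sub_self, abs_zero] at hy_eq
  linarith

theorem constant_after_double_critical_general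
    (N m : ℝ) (hm : 1 < m) (hNm : m ≤ N) (f : ℝ → ℝ) (hf : Continuous f)
    (J : Set ℝ) (hJc : J.OrdConnected) (hJ0 : J ⊆ Set.Ioi (0:ℝ))
    (u u' : ℝ → ℝ) (hu : IsSolutionOn N m f J u u')
    (r₀ : ℝ) (hr₀ : r₀ ∈ J) (hd : u' r₀ = 0)
    (hmin : ∃ ε : ℝ, 0 < ε ∧ ∀ s : ℝ, |s - u r₀| < ε → s ≠ u r₀ →
      Fint f (u r₀) < Fint f s) :
    ∀ r ∈ J, r₀ ≤ r → u r = u r₀ := by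
  obtain ⟨ε, hε, hF_min⟩ := hmin
  have hF_le : ∀ r ∈ J, r₀ ≤ r → Fint f (u r) ≤ Fint f (u r₀) := fun r hr hle =>
    Fint_le_of_deriv_eq_zero hm (by linarith) hf hJc hu ⟨hr₀, hJ0 hr₀⟩ hd ⟨hr, hJ0 hr⟩ hle
  have hs : IsPreconnected (J ∩ Ici r₀) := (hJc.inter ordConnected_Ici).isPreconnected
  have hu_cont : ContinuousOn u (J ∩ Ici r₀) := fun r hr =>
    (hu.1 r hr.1).continuousWithinAt.mono inter_subset_left
  intro r hr hle
  refine hs.eq_of_isolated_value hu_cont ⟨hr₀, le_refl r₀⟩ hε (fun x hx hx_near => ?_) r ⟨hr, hle⟩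
  by_contra hne
  exact (hF_le x hx.1 hx.2).not_gt (hF_min _ hx_near hne)

/-- if `u'(r₀) = 0`, `f(u(r₀)) = 0` and `u(r₀)` is a strict local
minimum point of `F`, then `u` is constant from `r₀` on. -/
theorem constant_after_double_critical
    (N m : ℝ) (hm : 1 < m) (hNm : m ≤ N) (f : ℝ → ℝ) (hf : Continuous f)
    (J : Set ℝ) (hJc : J.OrdConnected) (hJ0 : J ⊆ Set.Ioi (0:ℝ))
    (u u' : ℝ → ℝ) (hu : IsSolutionOn N m f J u u')
    (r₀ : ℝ) (hr₀ : r₀ ∈ J) (hd : u' r₀ = 0) (hfz : f (u r₀) = 0)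
    (hmin : ∃ ε : ℝ, 0 < ε ∧ ∀ s : ℝ, |s - u r₀| < ε → s ≠ u r₀ →
      Fint f (u r₀) < Fint f s) :
    ∀ r ∈ J, r₀ ≤ r → u r = u r₀ :=
  constant_after_double_critical_general N m hm hNm f hf J hJc hJ0 u u' hu r₀ hr₀ hd hmin
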